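/- For each fixed k ∈ ℕ, the set of connected directed graphs of maximum degree at most k is generated by a bonding grammar, namely the grammar whose start tuple is the concatenation of the start tuples of the regular grammars BG_reg^{(0)}, …, BG_reg^{(k)} (i.e., all hypergraphs &(I^j, O^{i−j}) for 0 ≤ j ≤ i ≤ k), with N = {I, O}, T = {b}, and O ⊗ I = b. -/

import Mathlib

/-! ## Hypergraphs (over a label alphabet `Λ`), bonding, breaking bonds,
bonding grammars, following "Bonding Grammars" (Pshenitsyn). -/

structure LHypergraph (Λ : Type) where
  V : Finset ℕ
  E : Finset ℕ
  att : ℕ → List ℕ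
  lab : ℕ → Λ

namespace LHypergraph

variable {Λ : Type}

/-- Attachment vertices lie in `V` and attachment lengths agree with types. -/
def WellFormed (typ : Λ → ℕ) (H : LHypergraph Λ) : Prop :=
  (∀ e ∈ H.E, ∀ v ∈ H.att e, v ∈ H.V) ∧
  (∀ e ∈ H.E, (H.att e).length = typ (H.lab e))

def Adj (H : LHypergraph Λ) (u v : ℕ) : Prop :=
  ∃ e ∈ H.E, u ∈ H.att e ∧ v ∈ H.att e

/-- There is a path between `u` and `v` in `H`. -/
def HasPath (H : LHypergraph Λ) (u v : ℕ) : Prop :=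
  Relation.ReflTransGen H.Adj u v

def Connected (H : LHypergraph Λ) : Prop :=
  ∀ u ∈ H.V, ∀ v ∈ H.V, H.HasPath u v

/-- The degree of a vertex: the number of pairs `(e, i)` with
`att e ( i ) = v`, i.e. occurrences of `v` in attachment sequences. -/
def degree (H : LHypergraph Λ) (v : ℕ) : ℕ :=
  ∑ e ∈ H.E, (H.att e).count v

def degreeSet (H : LHypergraph Λ) : Set ℕ :=
  {d | ∃ v ∈ H.V, H.degree v = d}

def Isomorphic (H G : LHypergraph Λ) : Prop :=
  ∃ f g : ℕ → ℕ,
    Set.BijOn f ↑H.V ↑G.V ∧ Set.BijOn g ↑H.E ↑G.E ∧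
    ∀ e ∈ H.E, G.att (g e) = (H.att e).map f ∧ G.lab (g e) = H.lab e

end LHypergraph

/-- A single bonding step: two distinct hyperedges `e₁, e₂` whose labels can be
bonded are merged into a single new hyperedge `e'` with concatenated
attachment sequence and label `lab e₁ ⊗ lab e₂`. -/
def BondingStep {Λ : Type} (bond : Λ → Λ → Option Λ) (H H' : LHypergraph Λ) : Prop :=
  ∃ e₁ e₂ e' t,
    e₁ ∈ H.E ∧ e₂ ∈ H.E ∧ e₁ ≠ e₂ ∧ e' ∉ H.E ∧
    bond (H.lab e₁) (H.lab e₂) = some t ∧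
    H'.V = H.V ∧
    H'.E = (H.E \ {e₁, e₂}) ∪ {e'} ∧
    (∀ e ∈ H.E \ {e₁, e₂}, H'.att e = H.att e ∧ H'.lab e = H.lab e) ∧
    H'.att e' = H.att e₁ ++ H.att e₂ ∧
    H'.lab e' = t

/-- Breaking the bond `e'` (whose label is `A₁ ⊗ A₂`) of `H'`, introducing the
fresh hyperedges `e₁, e₂`, yields `H`. -/
def BreakBondAt {Λ : Type} (typ : Λ → ℕ) (bond : Λ → Λ → Option Λ)
    (H' H : LHypergraph Λ) (e' e₁ e₂ : ℕ) : Prop :=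
  ∃ A₁ A₂,
    e' ∈ H'.E ∧ e₁ ∉ H'.E ∧ e₂ ∉ H'.E ∧ e₁ ≠ e₂ ∧
    bond A₁ A₂ = some (H'.lab e') ∧
    H.V = H'.V ∧
    H.E = (H'.E \ {e'}) ∪ {e₁, e₂} ∧
    (∀ e ∈ H'.E \ {e'}, H.att e = H'.att e ∧ H.lab e = H'.lab e) ∧
    H.att e₁ = (H'.att e').take (typ A₁) ∧
    H.att e₂ = (H'.att e').drop (typ A₁) ∧
    H.lab e₁ = A₁ ∧ H.lab e₂ = A₂

def BreakBond {Λ : Type} (typ : Λ → ℕ) (bond : Λ → Λ → Option Λ)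
    (H' H : LHypergraph Λ) : Prop :=
  ∃ e' e₁ e₂, BreakBondAt typ bond H' H e' e₁ e₂

/-- `BreaksTo typ bond H l F`: starting from `H` and successively breaking the
bonds listed in `l` yields `F`. -/
def BreaksTo {Λ : Type} (typ : Λ → ℕ) (bond : Λ → Λ → Option Λ) :
    LHypergraph Λ → List ℕ → LHypergraph Λ → Prop
  | H, [], F => H = F
  | H, e :: l, F => ∃ H₁ e₁ e₂, BreakBondAt typ bond H H₁ e e₁ e₂ ∧ BreaksTo typ bond H₁ l F

/-- `H` is a disjoint union of copies of hypergraphs from `Zs`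
(this plays the role of `m · Z`). -/
def IsUnionOfCopies {Λ : Type} (Zs : Set (LHypergraph Λ)) (H : LHypergraph Λ) : Prop :=
  ∃ (n : ℕ) (cV cE : ℕ → ℕ),
    (∀ v ∈ H.V, cV v < n) ∧ (∀ e ∈ H.E, cE e < n) ∧
    (∀ e ∈ H.E, ∀ v ∈ H.att e, v ∈ H.V) ∧
    (∀ e ∈ H.E, ∀ v ∈ H.att e, cV v = cE e) ∧
    ∀ i < n, ∃ Z0 ∈ Zs, LHypergraph.Isomorphic
      ⟨H.V.filter (fun v => cV v = i), H.E.filter (fun e => cE e = i), H.att, H.lab⟩ Z0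

/-- `C` is a connected component of `H`. -/
def IsComponent {Λ : Type} (H C : LHypergraph Λ) : Prop :=
  C.V ⊆ H.V ∧ C.att = H.att ∧ C.lab = H.lab ∧ C.V.Nonempty ∧
  (∀ u ∈ C.V, ∀ v ∈ H.V, (H.HasPath u v ↔ v ∈ C.V)) ∧
  ∀ e, e ∈ C.E ↔ (e ∈ H.E ∧ ∃ v ∈ H.att e, v ∈ C.V)

/-- Disjoint union of two hypergraphs (via an even/odd renaming). -/
def hsum {Λ : Type} (H K : LHypergraph Λ) : LHypergraph Λ :=
  ⟨H.V.image (fun v => 2 * v) ∪ K.V.image (fun v => 2 * v + 1),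
   H.E.image (fun e => 2 * e) ∪ K.E.image (fun e => 2 * e + 1),
   fun e => if e % 2 = 0 then (H.att (e / 2)).map (fun v => 2 * v)
            else (K.att (e / 2)).map (fun v => 2 * v + 1),
   fun e => if e % 2 = 0 then H.lab (e / 2) else K.lab (e / 2)⟩

/-- A bonding grammar: typed labels, nonterminal and terminal alphabets, a
partial bond function, and a tuple `Z` of start hypergraphs. -/
structure BondingGrammar (Λ : Type) where
  typ : Λ → ℕ
  N : Set Λ
  T : Set Λ
  bond : Λ → Λ → Option Λ
  k : ℕ
  Z : Fin k → LHypergraph Λ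

namespace BondingGrammar

variable {Λ : Type}

/-- Side conditions from the definition of a bonding grammar: `N` and `T` are
disjoint, the start hypergraphs are connected and well-formed, and the bond
function is a partial injective function `N × N ⇀ T` adding the types. -/
def WellFormed (G : BondingGrammar Λ) : Prop :=
  Disjoint G.N G.T ∧
  (∀ i, (G.Z i).Connected ∧ (G.Z i).WellFormed G.typ) ∧
  (∀ A₁ A₂ t, G.bond A₁ A₂ = some t →
    A₁ ∈ G.N ∧ A₂ ∈ G.N ∧ t ∈ G.T ∧ G.typ t = G.typ A₁ + G.typ A₂) ∧
  (∀ A₁ A₂ B₁ B₂ t, G.bond A₁ A₂ = some t → G.bond B₁ B₂ = some t →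
    A₁ = B₁ ∧ A₂ = B₂)

def ZSet (G : BondingGrammar Λ) : Set (LHypergraph Λ) :=
  {Z0 | ∃ i, Z0 = G.Z i}

/-- `G` generates `H` if some `m · Z` derives `H` by bonding steps. -/
def Generates (G : BondingGrammar Λ) (H : LHypergraph Λ) : Prop :=
  ∃ H₀, IsUnionOfCopies G.ZSet H₀ ∧
    Relation.ReflTransGen (BondingStep G.bond) H₀ H

/-- The language of `G`: generated hypergraphs all of whose labels are terminal. -/
def Lang (G : BondingGrammar Λ) : Set (LHypergraph Λ) :=
  {H | G.Generates H ∧ ∀ e ∈ H.E, H.lab e ∈ G.T}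

end BondingGrammar

/-! Labels `I, O` (nonterminal, type 1) and `b` (terminal, type 2). -/

inductive Lab : Type
  | I | O | b
deriving DecidableEq

def typLab : Lab → ℕ
  | .I => 1 | .O => 1 | .b => 2

def bondLab : Lab → Lab → Option Lab
  | .O, .I => some .b
  | _, _ => none

/-- The hypergraph `&(I^j, O^(k-j))`: one vertex with `j` hyperedges labelled
`I` and `k - j` hyperedges labelled `O` attached to it. -/
def Zreg (k j : ℕ) : LHypergraph Lab :=
  ⟨{0}, Finset.range k, fun _ => [0], fun e => if e < j then Lab.I else Lab.O⟩

/-- The bonding grammar `BG_reg^(k)` with start tuple `Z_0^(k), …, Z_k^(k)`. -/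
def BGreg (k : ℕ) : BondingGrammar Lab :=
  { typ := typLab, N := {Lab.I, Lab.O}, T := {Lab.b}, bond := bondLab,
    k := k + 1, Z := fun j => Zreg k (j : ℕ) }

/-- The star graph with one center connected by a `b`-labelled edge to each of
`n` leaves. -/
def starGraph (n : ℕ) : LHypergraph Lab :=
  ⟨Finset.range (n + 1), Finset.range n, fun e => [0, e + 1], fun _ => Lab.b⟩

/-- The grammar whose start tuple consists of all `&(I^j, O^(i-j))` for
`0 ≤ j ≤ i ≤ k` (the concatenation of the start tuples of
`BG_reg^(0), …, BG_reg^(k)`, listed with harmless repetitions). -/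
def BGdeg (k : ℕ) : BondingGrammar Lab :=
  { typ := typLab, N := {Lab.I, Lab.O}, T := {Lab.b}, bond := bondLab,
    k := (k + 1) * (k + 1),
    Z := fun n => Zreg ((n : ℕ) % (k + 1)) (min ((n : ℕ) / (k + 1)) ((n : ℕ) % (k + 1))) }

/-! Bonding steps preserve the vertex set and all vertex degrees, and, since `O ⊗ I = b` adds
the types, well-formedness; each start graph `&(I^j, O^(i-j))` with `i ≤ k` is well formed with
its one vertex of degree `i ≤ k`. Conversely, cutting every `b`-edge `u → v` into an `O`-loop at
`u` and an `I`-loop at `v` turns a graph of maximum degree at most `k` into a disjoint union of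
start graphs, one per vertex, from which bonding the halves back together recovers the graph. -/

open Finset

theorem List.count_map_of_injOn {α β : Type*} [DecidableEq α] [DecidableEq β]
    {f : α → β} {s : Set α} (hf : s.InjOn f) {l : List α} (hl : ∀ y ∈ l, y ∈ s)
    {x : α} (hx : x ∈ s) : (l.map f).count (f x) = l.count x := by
  induction l with
  | nil => rfl
  | cons a l ih =>
    simp [List.count_cons, hf.eq_iff (hl a List.mem_cons_self) hx,
      ih fun y hy => hl y (List.mem_cons_of_mem a hy)]

theorem Finset.exists_bijOn_range {α : Type*} (s : Finset α) :
    ∃ f : α → ℕ, Set.BijOn f s (Finset.range #s) :=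
  s.finite_toSet.exists_bijOn_of_encard_eq <| by
    rw [Set.encard_coe_eq_coe_finsetCard, Set.encard_coe_eq_coe_finsetCard, card_range]

theorem Finset.exists_bijOn_range_filter {α : Type*} (s : Finset α) (p : α → Prop)
    [DecidablePred p] :
    ∃ g : α → ℕ, Set.BijOn g s (Finset.range #s) ∧ ∀ x ∈ s, (g x < #(s.filter p) ↔ p x) := by
  obtain ⟨f₁, hf₁⟩ := (s.filter p).exists_bijOn_range
  obtain ⟨f₂, hf₂⟩ := (s.filter (¬ p ·)).exists_bijOn_range
  have hcard := s.card_filter_add_card_filter_not p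
  set j := #(s.filter p)
  let g x := if p x then f₁ x else j + f₂ x
  have hg₁ : ∀ x ∈ s, p x → g x < j := fun x hx hpx => by
    simpa [g, hpx] using hf₁.mapsTo (by simp [hx, hpx] : x ∈ (s.filter p : Set α))
  have hg₂ : ∀ x ∈ s, ¬ p x → j ≤ g x ∧ g x < #s := fun x hx hpx => by
    have := hf₂.mapsTo (by simp [hx, hpx] : x ∈ (s.filter (¬ p ·) : Set α))
    simp only [Finset.coe_range, Set.mem_Iio] at this
    simp only [g, hpx, if_false]
    omega
  refine ⟨g, ⟨fun x hx => ?_, fun x hx y hy hxy => ?_, fun i hi => ?_⟩, fun x hx => ?_⟩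
  · by_cases hpx : p x
    · simpa using (hg₁ x hx hpx).trans_le (by omega)
    · simpa using (hg₂ x hx hpx).2
  · by_cases hpx : p x <;> by_cases hpy : p y
    · simp only [g, hpx, hpy, if_true] at hxy
      exact hf₁.injOn (by simp [hpx, Finset.mem_coe.1 hx]) (by simp [hpy, Finset.mem_coe.1 hy]) hxy
    · exact absurd hxy ((hg₁ x hx hpx).trans_le (hg₂ y hy hpy).1).ne
    · exact absurd hxy.symm ((hg₁ y hy hpy).trans_le (hg₂ x hx hpx).1).ne
    · simp only [g, hpx, hpy, if_false, add_right_inj] at hxy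
      exact hf₂.injOn (by simp [hpx, Finset.mem_coe.1 hx]) (by simp [hpy, Finset.mem_coe.1 hy]) hxy
  · simp only [Finset.coe_range, Set.mem_Iio] at hi
    by_cases hij : i < j
    · obtain ⟨x, hx, rfl⟩ := hf₁.surjOn (by simpa using hij)
      simp only [Finset.coe_filter, Set.mem_ofPred_eq] at hx
      exact ⟨x, hx.1, by simp [g, hx.2]⟩
    · obtain ⟨x, hx, hfx⟩ := hf₂.surjOn (by simp; omega : i - j ∈ (Finset.range _ : Set ℕ))
      simp only [Finset.coe_filter, Set.mem_ofPred_eq] at hx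
      exact ⟨x, hx.1, by simp [g, hx.2, hfx]; omega⟩
  · by_cases hpx : p x
    · simp [hpx, hg₁ x hx hpx]
    · simp [hpx, (hg₂ x hx hpx).1]

namespace LHypergraph

variable {Λ : Type} {H G : LHypergraph Λ}

theorem card_le_degree {s : Finset ℕ} {w : ℕ} (hs : s ⊆ H.E) (hw : ∀ e ∈ s, H.att e = [w]) :
    #s ≤ H.degree w :=
  calc #s = ∑ e ∈ s, (H.att e).count w :=
        (Finset.card_eq_sum_ones s).trans (Finset.sum_congr rfl fun e he => by simp [hw e he])
    _ ≤ H.degree w := Finset.sum_le_sum_of_subset hs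

theorem Isomorphic.wellFormed {typ : Λ → ℕ} (h : H.Isomorphic G)
    (hatt : ∀ e ∈ H.E, ∀ v ∈ H.att e, v ∈ H.V) (hG : G.WellFormed typ) : H.WellFormed typ := by
  obtain ⟨f, g, -, hg, hfg⟩ := h
  refine ⟨hatt, fun e he => ?_⟩
  have := hG.2 (g e) (hg.mapsTo he)
  rwa [(hfg e he).1, (hfg e he).2, List.length_map] at this

theorem Isomorphic.exists_degree_eq (h : H.Isomorphic G)
    (hatt : ∀ e ∈ H.E, ∀ v ∈ H.att e, v ∈ H.V) {v : ℕ} (hv : v ∈ H.V) :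
    ∃ w ∈ G.V, G.degree w = H.degree v := by
  obtain ⟨f, g, hf, hg, hfg⟩ := h
  refine ⟨f v, hf.mapsTo hv, (Finset.sum_nbij g hg.mapsTo hg.injOn hg.surjOn fun e he => ?_).symm⟩
  rw [(hfg e he).1, List.count_map_of_injOn hf.injOn (hatt e he) hv]

end LHypergraph

theorem IsUnionOfCopies.wellFormed_and_degree_le {Λ : Type} {typ : Λ → ℕ} {k : ℕ}
    {Zs : Set (LHypergraph Λ)} {K : LHypergraph Λ}
    (hZs : ∀ Z ∈ Zs, Z.WellFormed typ ∧ ∀ w ∈ Z.V, Z.degree w ≤ k)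
    (hK : IsUnionOfCopies Zs K) : K.WellFormed typ ∧ ∀ v ∈ K.V, K.degree v ≤ k := by
  obtain ⟨n, cV, cE, hcV, hcE, hatt, hc, hiso⟩ := hK
  have hpiece : ∀ i, ∀ e ∈ K.E.filter (cE · = i), ∀ v ∈ K.att e, v ∈ K.V.filter (cV · = i) :=
    fun i e he v hv => by
      rw [Finset.mem_filter] at he ⊢
      exact ⟨hatt e he.1 v hv, (hc e he.1 v hv).trans he.2⟩
  refine ⟨⟨hatt, fun e he => ?_⟩, fun v hv => ?_⟩
  · obtain ⟨Z, hZ, hiso⟩ := hiso (cE e) (hcE e he)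
    exact ((hiso.wellFormed (hpiece _) (hZs Z hZ).1).2 e (by simp [he]))
  · obtain ⟨Z, hZ, hiso⟩ := hiso (cV v) (hcV v hv)
    obtain ⟨w, hw, hdeg⟩ := hiso.exists_degree_eq (hpiece _) (Finset.mem_filter.2 ⟨hv, rfl⟩)
    calc K.degree v = ∑ e ∈ K.E.filter (cE · = cV v), (K.att e).count v :=
          (Finset.sum_filter_of_ne fun e he hne =>
            (hc e he v (List.count_pos_iff.1 (Nat.pos_of_ne_zero hne))).symm).symm
      _ = Z.degree w := hdeg.symm
      _ ≤ k := (hZs Z hZ).2 w hw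

section Bonding

variable {Λ : Type} {bond : Λ → Λ → Option Λ} {H H' : LHypergraph Λ}

theorem BondingStep.degree_eq (h : BondingStep bond H H') : H'.degree = H.degree := by
  obtain ⟨e₁, e₂, e', t, he₁, he₂, hne, he', -, -, hE, hkeep, hatt, -⟩ := h
  funext v
  have hpair : {e₁, e₂} ⊆ H.E := Finset.insert_subset he₁ (Finset.singleton_subset_iff.2 he₂)
  unfold LHypergraph.degree
  have hdisj : Disjoint (H.E \ {e₁, e₂}) {e'} :=
    Finset.disjoint_singleton_right.2 fun h => he' (Finset.mem_sdiff.1 h).1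
  rw [hE, Finset.sum_union hdisj, Finset.sum_singleton, hatt, List.count_append,
    ← Finset.sum_sdiff hpair, Finset.sum_pair hne]
  congr 1
  exact Finset.sum_congr rfl fun e he => by rw [(hkeep e he).1]

theorem BondingStep.wellFormed {typ : Λ → ℕ}
    (hbond : ∀ A B t, bond A B = some t → typ t = typ A + typ B)
    (h : BondingStep bond H H') (hH : H.WellFormed typ) : H'.WellFormed typ := by
  obtain ⟨e₁, e₂, e', t, he₁, he₂, -, -, ht, hV, hE, hkeep, hatt, hlab⟩ := h
  rw [LHypergraph.WellFormed, hE, hV]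
  simp only [Finset.mem_union, Finset.mem_singleton]
  refine ⟨fun e he v hv => ?_, fun e he => ?_⟩ <;> rcases he with he | rfl
  · rw [(hkeep e he).1] at hv
    exact hH.1 e (Finset.mem_sdiff.1 he).1 v hv
  · rw [hatt, List.mem_append] at hv
    exact hv.elim (hH.1 e₁ he₁ v) (hH.1 e₂ he₂ v)
  · rw [(hkeep e he).1, (hkeep e he).2]
    exact hH.2 e (Finset.mem_sdiff.1 he).1
  · rw [hatt, hlab, List.length_append, hH.2 e₁ he₁, hH.2 e₂ he₂, hbond _ _ _ ht]

theorem V_eq_and_degree_eq_of_reflTransGen (h : Relation.ReflTransGen (BondingStep bond) H H') :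
    H'.V = H.V ∧ H'.degree = H.degree := by
  induction h with
  | refl => exact ⟨rfl, rfl⟩
  | tail _ hstep ih =>
    have hdeg := hstep.degree_eq
    obtain ⟨_, _, _, _, -, -, -, -, -, hV, -⟩ := hstep
    exact ⟨hV.trans ih.1, hdeg.trans ih.2⟩

theorem wellFormed_of_reflTransGen {typ : Λ → ℕ}
    (hbond : ∀ A B t, bond A B = some t → typ t = typ A + typ B)
    (h : Relation.ReflTransGen (BondingStep bond) H H') (hH : H.WellFormed typ) :
    H'.WellFormed typ := by
  induction h with
  | refl => exact hH
  | tail _ hstep ih => exact hstep.wellFormed hbond ih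

end Bonding

theorem typLab_of_bondLab (A B t : Lab) (h : bondLab A B = some t) :
    typLab t = typLab A + typLab B := by
  cases A <;> cases B <;> cases t <;> simp_all [bondLab, typLab]

theorem Zreg_wellFormed (m j : ℕ) : (Zreg m j).WellFormed typLab :=
  ⟨fun _ _ v hv => by simpa [Zreg] using hv, fun e _ => by simp only [Zreg]; split <;> rfl⟩

theorem Zreg_degree_zero (m j : ℕ) : (Zreg m j).degree 0 = m := by
  simp [Zreg, LHypergraph.degree]

theorem mem_ZSet_BGdeg {k : ℕ} {Z : LHypergraph Lab} :
    Z ∈ (BGdeg k).ZSet ↔ ∃ m ≤ k, ∃ j ≤ m, Z = Zreg m j := by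
  constructor
  · rintro ⟨i, rfl⟩
    exact ⟨i % (k + 1), Nat.lt_succ_iff.1 (Nat.mod_lt _ k.succ_pos), _, min_le_right _ _, rfl⟩
  · rintro ⟨m, hmk, j, hjm, rfl⟩
    have hdiv : (j * (k + 1) + m) / (k + 1) = j := by
      rw [Nat.add_comm, Nat.add_mul_div_right _ _ k.succ_pos, Nat.div_eq_of_lt (by omega),
        zero_add]
    have hmod : (j * (k + 1) + m) % (k + 1) = m := by
      rw [Nat.add_comm, Nat.add_mul_mod_self_right, Nat.mod_eq_of_lt (by omega)]
    refine ⟨⟨j * (k + 1) + m, show _ < (k + 1) * (k + 1) by nlinarith⟩, ?_⟩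
    simp only [BGdeg, hdiv, hmod, min_eq_left hjm]

theorem isomorphic_Zreg {w : ℕ} {E : Finset ℕ} {att : ℕ → List ℕ} {lab : ℕ → Lab}
    (hatt : ∀ e ∈ E, att e = [w]) (hlab : ∀ e ∈ E, lab e ≠ Lab.b) :
    (⟨{w}, E, att, lab⟩ : LHypergraph Lab).Isomorphic (Zreg #E #(E.filter (lab · = Lab.I))) := by
  obtain ⟨g, hg, hgI⟩ := E.exists_bijOn_range_filter (lab · = Lab.I)
  refine ⟨fun _ => 0, g, ?_, hg, fun e he => ⟨by simp [Zreg, hatt e he], ?_⟩⟩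
  · simp [Set.BijOn, Set.MapsTo, Set.InjOn, Set.SurjOn, Zreg]
  · simp only [Zreg]
    split_ifs with hge
    · exact ((hgI e he).1 hge).symm
    · have hnI : lab e ≠ Lab.I := fun h => hge ((hgI e he).2 h)
      have hnb := hlab e he
      generalize lab e = l at hnI hnb ⊢
      cases l <;> simp_all

theorem forall_mem_ZSet_BGdeg {k : ℕ} :
    ∀ Z ∈ (BGdeg k).ZSet, Z.WellFormed typLab ∧ ∀ w ∈ Z.V, Z.degree w ≤ k := by
  intro Z hZ
  obtain ⟨m, hmk, j, -, rfl⟩ := mem_ZSet_BGdeg.1 hZ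
  refine ⟨Zreg_wellFormed m j, fun w hw => ?_⟩
  rw [Finset.mem_singleton.1 hw, Zreg_degree_zero]
  exact hmk

theorem isUnionOfCopies_BGdeg {k : ℕ} {K : LHypergraph Lab} (hK : K.WellFormed typLab)
    (hlab : ∀ e ∈ K.E, K.lab e ≠ Lab.b) (hdeg : ∀ v ∈ K.V, K.degree v ≤ k) :
    IsUnionOfCopies (BGdeg k).ZSet K := by
  have hloop : ∀ e ∈ K.E, K.att e = [(K.att e).headI] := fun e he => by
    have hlen : (K.att e).length = 1 := by
      rw [hK.2 e he]
      cases h : K.lab e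
      exacts [rfl, rfl, absurd h (hlab e he)]
    obtain ⟨v, hv⟩ := List.length_eq_one_iff.1 hlen
    simp [hv]
  obtain ⟨c, hc⟩ := K.V.exists_bijOn_range
  refine ⟨#K.V, c, fun e => c (K.att e).headI, fun v hv => by simpa using hc.mapsTo hv,
    fun e he => by simpa using hc.mapsTo (hK.1 e he _ (by rw [hloop e he]; simp)), hK.1,
    fun e he v hv => by rw [hloop e he, List.mem_singleton] at hv; rw [hv], fun i hi => ?_⟩
  obtain ⟨w, hw, rfl⟩ := hc.surjOn (by simpa using hi)
  have hEw : ∀ e ∈ K.E.filter (fun e => c (K.att e).headI = c w), K.att e = [w] := by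
    intro e he
    rw [Finset.mem_filter] at he
    rw [hloop e he.1, hc.injOn (hK.1 e he.1 _ (by rw [hloop e he.1]; simp)) hw he.2]
  have hVw : K.V.filter (c · = c w) = {w} := by
    ext v
    simp only [Finset.mem_filter, Finset.mem_singleton]
    exact ⟨fun hv => hc.injOn hv.1 hw hv.2, by rintro rfl; exact ⟨hw, rfl⟩⟩
  rw [hVw]
  refine ⟨_, mem_ZSet_BGdeg.2 ⟨_, ?_, _, Finset.card_filter_le _ _, rfl⟩,
    isomorphic_Zreg hEw fun e he => hlab e (Finset.mem_filter.1 he).1⟩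
  exact (K.card_le_degree (Finset.filter_subset _ _) hEw).trans (hdeg w hw)

def LHypergraph.freshEdge {Λ : Type} (K : LHypergraph Λ) : ℕ := K.E.sup id + 1

theorem LHypergraph.lt_freshEdge {Λ : Type} {K : LHypergraph Λ} {e : ℕ} (he : e ∈ K.E) :
    e < K.freshEdge :=
  Nat.lt_succ_of_le (Finset.le_sup (f := id) he)

def splitEdge (K : LHypergraph Lab) (e : ℕ) : LHypergraph Lab :=
  ⟨K.V, insert K.freshEdge (insert (K.freshEdge + 1) (K.E.erase e)),
    fun x => if x = K.freshEdge then (K.att e).take 1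
      else if x = K.freshEdge + 1 then (K.att e).drop 1 else K.att x,
    fun x => if x = K.freshEdge then Lab.O else if x = K.freshEdge + 1 then Lab.I else K.lab x⟩

section splitEdge

variable {K : LHypergraph Lab} {e : ℕ}

theorem bondingStep_splitEdge (he : e ∈ K.E) (hb : K.lab e = Lab.b) :
    BondingStep bondLab (splitEdge K e) K := by
  have hlt := K.lt_freshEdge he
  refine ⟨K.freshEdge, K.freshEdge + 1, e, Lab.b, by simp [splitEdge], by simp [splitEdge],
    by omega, ?_, by simp [splitEdge, bondLab], rfl, ?_, fun x hx => ?_,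
    (List.take_append_drop 1 _).symm.trans (by simp [splitEdge]), hb⟩
  · simp [splitEdge]
    omega
  · ext x
    have := @LHypergraph.lt_freshEdge _ K x
    simp only [splitEdge, Finset.mem_union, Finset.mem_sdiff, Finset.mem_insert,
      Finset.mem_erase, Finset.mem_singleton]
    grind
  · simp only [splitEdge, Finset.mem_sdiff, Finset.mem_insert, Finset.mem_erase,
      Finset.mem_singleton, not_or] at hx
    simp [splitEdge, hx.2.1, hx.2.2]

theorem wellFormed_splitEdge (hK : K.WellFormed typLab) (he : e ∈ K.E) (hb : K.lab e = Lab.b) :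
    (splitEdge K e).WellFormed typLab := by
  have hlen : (K.att e).length = 2 := by rw [hK.2 e he, hb]; rfl
  refine ⟨fun x hx v hv => ?_, fun x hx => ?_⟩
  · simp only [splitEdge, Finset.mem_insert, Finset.mem_erase] at hx hv ⊢
    split_ifs at hv
    exacts [hK.1 e he v (List.mem_of_mem_take hv), hK.1 e he v (List.mem_of_mem_drop hv),
      hK.1 x (by grind) v hv]
  · simp only [splitEdge, Finset.mem_insert, Finset.mem_erase] at hx ⊢
    split_ifs
    · simp [hlen, typLab]
    · simp [hlen, typLab]
    · exact hK.2 x (by grind)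

theorem filter_lab_b_splitEdge (he : e ∈ K.E) :
    (splitEdge K e).E.filter ((splitEdge K e).lab · = Lab.b) =
      (K.E.filter (K.lab · = Lab.b)).erase e := by
  ext x
  have := K.lt_freshEdge he
  have := @LHypergraph.lt_freshEdge _ K x
  simp [splitEdge]
  grind

end splitEdge

theorem exists_reflTransGen_of_wellFormed {K : LHypergraph Lab} (hK : K.WellFormed typLab) :
    ∃ K₀ : LHypergraph Lab, K₀.WellFormed typLab ∧ (∀ e ∈ K₀.E, K₀.lab e ≠ Lab.b) ∧
      Relation.ReflTransGen (BondingStep bondLab) K₀ K := by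
  by_cases h : ∃ e ∈ K.E, K.lab e = Lab.b
  · obtain ⟨e, he, hb⟩ := h
    obtain ⟨K₀, hK₀, hlab₀, hder⟩ :=
      exists_reflTransGen_of_wellFormed (wellFormed_splitEdge hK he hb)
    exact ⟨K₀, hK₀, hlab₀, hder.tail (bondingStep_splitEdge he hb)⟩
  · push Not at h
    exact ⟨K, hK, h, .refl⟩
termination_by #(K.E.filter (K.lab · = Lab.b))
decreasing_by
  rw [filter_lab_b_splitEdge he]
  exact Finset.card_erase_lt_of_mem (Finset.mem_filter.2 ⟨he, hb⟩)

/-- the grammar `BGdeg k` generates exactly the connected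
directed graphs of maximum degree at most `k`. -/
theorem BGdeg_generates_bounded_degree (k : ℕ) (H : LHypergraph Lab) :
    (H ∈ BondingGrammar.Lang (BGdeg k) ∧ H.Connected) ↔
    (H.WellFormed typLab ∧ (∀ e ∈ H.E, H.lab e = Lab.b) ∧ H.Connected ∧
      ∀ v ∈ H.V, H.degree v ≤ k) := by
  constructor
  · rintro ⟨⟨⟨H₀, hH₀, hder⟩, hT⟩, hconn⟩
    obtain ⟨hwf₀, hdeg₀⟩ := hH₀.wellFormed_and_degree_le forall_mem_ZSet_BGdeg
    obtain ⟨hV, hdeg⟩ := V_eq_and_degree_eq_of_reflTransGen hder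
    refine ⟨wellFormed_of_reflTransGen typLab_of_bondLab hder hwf₀, hT, hconn, ?_⟩
    rw [hV, hdeg]
    exact hdeg₀
  · rintro ⟨hwf, hlab, hconn, hdeg⟩
    obtain ⟨H₀, hwf₀, hlab₀, hder⟩ := exists_reflTransGen_of_wellFormed hwf
    obtain ⟨hV, hdeg'⟩ := V_eq_and_degree_eq_of_reflTransGen hder
    refine ⟨⟨⟨H₀, isUnionOfCopies_BGdeg hwf₀ hlab₀ ?_, hder⟩, hlab⟩, hconn⟩
    rw [← hV, ← hdeg']
    exact hdeg
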